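/- Let τ_0 = -1 < τ_1 < … < τ_N be distinct nodes with differentiation matrix D, suppose D_{1:N} is invertible with ‖D_{1:N}^{-1}‖_∞ ≤ 2, and let A_1,…,A_N ∈ ℝ^{n×n} satisfy ‖A_i‖_∞ ≤ 1/4 for all i. Then for every q ∈ ℝ^n and every p = (p_1,…,p_N) with p_i ∈ ℝ^n, the linear system Σ_{j=0}^{N} D_{ij} X_j − A_i X_i = p_i (1 ≤ i ≤ N), X_0 = q, has a unique solution X_0, X_1, …, X_N ∈ ℝ^n, and this solution satisfies ‖X_j‖_∞ ≤ 4‖p‖_∞ + 2‖q‖_∞ for 0 ≤ j ≤ N, where ‖·‖_∞ denotes the maximum absolute entry of a vector. -/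

import Mathlib

/-!
Each row of `D` sums to zero because the Lagrange basis sums to `1`, so row `i` of the system
reads `∑ⱼ (D_{1:N})ᵢⱼ (Xⱼ - X₀) = pᵢ + Aᵢ Xᵢ`. Inverting `D_{1:N}` coordinatewise gives, for
`M = maxⱼ ‖Xⱼ‖∞`, the bound `M ≤ ‖q‖∞ + 2 (‖p‖∞ + M / 4)`, i.e. `M ≤ 4 ‖p‖∞ + 2 ‖q‖∞`.
With `p = q = 0` this forces `X = 0`, so the linear map `X ↦ (residuals, X₀)` between spaces of
the same dimension `(N + 1) n` is injective, hence bijective.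
-/

open Polynomial Matrix

noncomputable section

/-- The differentiation matrix associated with nodes `σ 0, σ 1, …, σ N`
(`σ 0` being the non-collocated point):  `D i j = L̇_j(σ (i+1))`,
where `L_j` is the `j`-th Lagrange basis polynomial of the nodes. -/
def diffMat (N : ℕ) (σ : Fin (N + 1) → ℝ) : Matrix (Fin N) (Fin (N + 1)) ℝ :=
  fun i j => (derivative (Lagrange.basis Finset.univ σ j)).eval (σ i.succ)

/-- The square submatrix of `D` formed by columns `1` through `N`. -/
def diffMat1N (N : ℕ) (σ : Fin (N + 1) → ℝ) : Matrix (Fin N) (Fin N) ℝ :=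
  fun i j => diffMat N σ i j.succ

theorem Fin.sum_smul_eq_sum_succ_smul_sub {R M : Type*} [Ring R] [AddCommGroup M] [Module R M]
    {k : ℕ} (w : Fin (k + 1) → R) (hw : ∑ j, w j = 0) (x : Fin (k + 1) → M) :
    ∑ j, w j • x j = ∑ j : Fin k, w j.succ • (x j.succ - x 0) := by
  rw [Fin.sum_univ_succ] at hw
  rw [Fin.sum_univ_succ, eq_neg_of_add_eq_zero_left hw]
  simp only [smul_sub, Finset.sum_sub_distrib, ← Finset.sum_smul, neg_smul]
  abel

theorem Matrix.norm_mulVec_le_of_row_sum_le {m l : Type*} [Fintype m] [Fintype l]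
    (M : Matrix m l ℝ) {a : ℝ} (ha : 0 ≤ a) (hM : ∀ i, ∑ j, |M i j| ≤ a) (v : l → ℝ) :
    ‖M *ᵥ v‖ ≤ a * ‖v‖ := by
  refine (pi_norm_le_iff_of_nonneg (mul_nonneg ha (norm_nonneg v))).2 fun i => ?_
  calc ‖(M *ᵥ v) i‖ ≤ ∑ j, |M i j| * |v j| := by
        simpa only [Real.norm_eq_abs, mulVec, dotProduct, abs_mul]
          using Finset.abs_sum_le_sum_abs (fun j => M i j * v j) Finset.univ
    _ ≤ ∑ j, |M i j| * ‖v‖ := by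
        gcongr with j
        exact norm_le_pi_norm v j
    _ ≤ a * ‖v‖ := by
        rw [← Finset.sum_mul]
        exact mul_le_mul_of_nonneg_right (hM i) (norm_nonneg v)

theorem pi_norm_le_iSup_abs {ι : Type*} [Fintype ι] (f : ι → ℝ) : ‖f‖ ≤ ⨆ i, |f i| :=
  (pi_norm_le_iff_of_nonneg (Real.iSup_nonneg fun i => abs_nonneg (f i))).2 fun i =>
    le_ciSup (Finite.bddAbove_range fun i => |f i|) i

theorem pi_norm_le_iSup_iSup_abs {ι κ : Type*} [Fintype ι] [Fintype κ] (f : ι → κ → ℝ) :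
    ‖f‖ ≤ ⨆ i, ⨆ k, |f i k| :=
  (pi_norm_le_iff_of_nonneg (Real.iSup_nonneg fun i => Real.iSup_nonneg fun k =>
    abs_nonneg (f i k))).2 fun i => (pi_norm_le_iSup_abs (f i)).trans
      (le_ciSup (f := fun i => ⨆ k, |f i k|) (Finite.bddAbove_range _) i)

theorem diffMat_row_sum_eq_zero {N : ℕ} {σ : Fin (N + 1) → ℝ} (hσ : Function.Injective σ)
    (i : Fin N) : ∑ j, diffMat N σ i j = 0 := by
  have hsum : ∑ j, Lagrange.basis Finset.univ σ j = 1 :=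
    Lagrange.sum_basis hσ.injOn Finset.univ_nonempty
  simp [diffMat, ← eval_finsetSum, ← derivative_sum, hsum]

section CollocationSystem

variable {N n : ℕ} (D : Matrix (Fin N) (Fin (N + 1)) ℝ) (A : Fin N → Matrix (Fin n) (Fin n) ℝ)

def collocationMap : (Fin (N + 1) → Fin n → ℝ) →ₗ[ℝ] (Fin N → Fin n → ℝ) × (Fin n → ℝ) where
  toFun X := (fun i => (∑ j, D i j • X j) - (A i).mulVec (X i.succ), X 0)
  map_add' X Y := by
    ext i k <;> simp [Finset.sum_add_distrib, mulVec_add]; ring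
  map_smul' c X := by
    ext i k <;> simp [Finset.mul_sum, mulVec_smul, mul_left_comm, mul_sub]

theorem collocationMap_eq_iff (X : Fin (N + 1) → Fin n → ℝ) (p : Fin N → Fin n → ℝ)
    (q : Fin n → ℝ) :
    collocationMap D A X = (p, q) ↔
      (∀ i, (∑ j, D i j • X j) - (A i).mulVec (X i.succ) = p i) ∧ X 0 = q := by
  simp [collocationMap, Prod.ext_iff, funext_iff]

/-- `‖·‖` on `Fin n → ℝ` and its iterates is the sup norm, i.e. the max-entry norm. -/
theorem collocationMap_norm_estimate (hrow : ∀ i, ∑ j, D i j = 0)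
    (hD : IsUnit (D.submatrix id Fin.succ)) {c a : ℝ} (hc : 0 ≤ c) (ha : 0 ≤ a)
    (hDinv : ∀ i, ∑ j, |(D.submatrix id Fin.succ)⁻¹ i j| ≤ c)
    (hA : ∀ i k, ∑ l, |A i k l| ≤ a) {X : Fin (N + 1) → Fin n → ℝ} {p : Fin N → Fin n → ℝ}
    {q : Fin n → ℝ} (hX : collocationMap D A X = (p, q)) :
    (1 - c * a) * ‖X‖ ≤ c * ‖p‖ + ‖q‖ := by
  obtain ⟨hsys, rfl⟩ := (collocationMap_eq_iff D A X p q).1 hX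
  set r : Fin N → Fin n → ℝ := fun i => p i + A i *ᵥ X i.succ
  have hr_eq : ∀ i, r i = ∑ j, D i j • X j := fun i => by
    simp only [r, ← hsys i, sub_add_cancel]
  have hr : ‖r‖ ≤ ‖p‖ + a * ‖X‖ := by
    refine (pi_norm_le_iff_of_nonneg (by positivity)).2 fun i => ?_
    calc ‖r i‖ ≤ ‖p i‖ + ‖A i *ᵥ X i.succ‖ := norm_add_le _ _
      _ ≤ ‖p‖ + a * ‖X‖ := by
        gcongr
        · exact norm_le_pi_norm p i
        · exact (norm_mulVec_le_of_row_sum_le (A i) ha (hA i) _).trans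
            (by gcongr; exact norm_le_pi_norm X i.succ)
  have hsucc : ∀ j : Fin N, ‖X j.succ‖ ≤ ‖X 0‖ + c * ‖r‖ := by
    intro j
    refine (pi_norm_le_iff_of_nonneg (by positivity)).2 fun l => ?_
    -- zero row sums turn row `i` into `D_{1:N}` applied to `(X j.succ - X 0)ⱼ`
    have hsys_l : D.submatrix id Fin.succ *ᵥ (fun j => X j.succ l - X 0 l) = fun i => r i l := by
      funext i
      rw [hr_eq, Fin.sum_smul_eq_sum_succ_smul_sub (D i) (hrow i) X]
      simp [mulVec, dotProduct]
    let := hD.invertible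
    calc ‖X j.succ l‖ = ‖X 0 l + ((D.submatrix id Fin.succ)⁻¹ *ᵥ fun i => r i l) j‖ := by
          rw [inv_mulVec_eq_vec hsys_l.symm, add_sub_cancel]
      _ ≤ ‖X 0‖ + c * ‖fun i => r i l‖ :=
          (norm_add_le _ _).trans (add_le_add (norm_le_pi_norm _ l)
            ((norm_le_pi_norm _ j).trans (norm_mulVec_le_of_row_sum_le _ hc hDinv _)))
      _ ≤ ‖X 0‖ + c * ‖r‖ := by
          gcongr
          exact (pi_norm_le_iff_of_nonneg (norm_nonneg r)).2 fun i =>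
            (norm_le_pi_norm (r i) l).trans (norm_le_pi_norm r i)
  have hX : ‖X‖ ≤ ‖X 0‖ + c * ‖r‖ :=
    (pi_norm_le_iff_of_nonneg (by positivity)).2 fun j =>
      Fin.cases (le_add_of_nonneg_right (by positivity)) hsucc j
  nlinarith

theorem collocationMap_bijective (hrow : ∀ i, ∑ j, D i j = 0)
    (hD : IsUnit (D.submatrix id Fin.succ)) {c a : ℝ} (hc : 0 ≤ c) (ha : 0 ≤ a) (hca : c * a < 1)
    (hDinv : ∀ i, ∑ j, |(D.submatrix id Fin.succ)⁻¹ i j| ≤ c)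
    (hA : ∀ i k, ∑ l, |A i k l| ≤ a) : Function.Bijective (collocationMap D A) := by
  have hinj : Function.Injective (collocationMap D A) := by
    refine (injective_iff_map_eq_zero _).2 fun X hX => norm_le_zero_iff.1 ?_
    have hest := collocationMap_norm_estimate D A hrow hD hc ha hDinv hA hX
    rw [norm_zero, norm_zero, mul_zero, add_zero] at hest
    nlinarith [norm_nonneg X]
  refine ⟨hinj, (LinearMap.injective_iff_surjective_of_finrank_eq_finrank ?_).1 hinj⟩
  simp [Module.finrank_pi_fintype]
  ring

end CollocationSystem

theorem discrete_state_system_unique_solution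
    (N n : ℕ) (σ : Fin (N + 1) → ℝ)
    (hmono : StrictMono σ)
    (hD : IsUnit (diffMat1N N σ))
    (hDnorm : ∀ i : Fin N, ∑ j, |(diffMat1N N σ)⁻¹ i j| ≤ 2)
    (A : Fin N → Matrix (Fin n) (Fin n) ℝ)
    (hA : ∀ (i : Fin N) (k : Fin n), ∑ l, |A i k l| ≤ 1 / 4)
    (q : Fin n → ℝ) (p : Fin N → Fin n → ℝ) :
    (∃! X : Fin (N + 1) → Fin n → ℝ,
      (∀ i : Fin N,
        (∑ j, diffMat N σ i j • X j) - (A i).mulVec (X i.succ) = p i) ∧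
      X 0 = q) ∧
    (∀ X : Fin (N + 1) → Fin n → ℝ,
      ((∀ i : Fin N,
          (∑ j, diffMat N σ i j • X j) - (A i).mulVec (X i.succ) = p i) ∧
        X 0 = q) →
      ∀ (j : Fin (N + 1)) (k : Fin n),
        |X j k| ≤ 4 * (⨆ i, ⨆ l, |p i l|) + 2 * ⨆ l, |q l|) := by
  have hrow := diffMat_row_sum_eq_zero hmono.injective
  simp only [← collocationMap_eq_iff]
  refine ⟨(collocationMap_bijective _ A hrow hD (by norm_num) (by norm_num) (by norm_num) hDnorm
    hA).existsUnique (p, q), fun X hX j k => ?_⟩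
  have hest := collocationMap_norm_estimate _ A hrow hD (by norm_num) (by norm_num) hDnorm hA hX
  calc |X j k| ≤ ‖X‖ := (norm_le_pi_norm (X j) k).trans (norm_le_pi_norm X j)
    _ ≤ 4 * ‖p‖ + 2 * ‖q‖ := by linarith
    _ ≤ 4 * (⨆ i, ⨆ l, |p i l|) + 2 * ⨆ l, |q l| := by
      gcongr
      exacts [pi_norm_le_iSup_iSup_abs p, pi_norm_le_iSup_abs q]
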